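/- Let A and B be stable matching instances on the same n workers and n firms such that all workers except possibly one worker w₁ have identical preference orders in A and B (the firms' preferences may differ arbitrarily; i.e., A and B are (1,n)). Then for any two matchings M₁, M₂ stable under both A and B: M₁ ∨_A M₂ = M₁ ∨_B M₂ and M₁ ∧_A M₂ = M₁ ∧_B M₂, and both of these matchings are stable under both A and B. In particular, M_A ∩ M_B is a sublattice of the lattice of A-stable matchings and of the lattice of B-stable matchings. -/

import Mathlib

/-- A stable matching instance on `n` workers and `n` firms: each worker `w` has a strict
total preference order over firms encoded by an injective rank function `wRank w`
(lower rank = more preferred), and each firm `f` has one over workers (`fRank f`). -/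
structure SMInstance (n : ℕ) where
  wRank : Fin n → Fin n → Fin n
  fRank : Fin n → Fin n → Fin n
  wRank_inj : ∀ w, Function.Injective (wRank w)
  fRank_inj : ∀ f, Function.Injective (fRank f)

/-- `(w, f)` is a blocking pair of the matching `M` under instance `I`:
`M w ≠ f`, `w` strictly prefers `f` to `M w`, and `f` strictly prefers `w`
to its `M`-partner (the worker `w'` with `M w' = f`). -/
def Blocking {n : ℕ} (I : SMInstance n) (M : Fin n → Fin n) (w f : Fin n) : Prop :=
  M w ≠ f ∧ I.wRank w f < I.wRank w (M w) ∧
    ∃ w', M w' = f ∧ I.fRank f w < I.fRank f w'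

/-- A matching (bijection) is stable under `I` if it has no blocking pair. -/
def IsStable {n : ℕ} (I : SMInstance n) (M : Fin n → Fin n) : Prop :=
  Function.Bijective M ∧ ∀ w f, ¬ Blocking I M w f

/-- The join `M₁ ∨_I M₂`: each worker gets its less preferred partner. -/
def joinMap {n : ℕ} (I : SMInstance n) (M₁ M₂ : Fin n → Fin n) : Fin n → Fin n :=
  fun w => if I.wRank w (M₁ w) < I.wRank w (M₂ w) then M₂ w else M₁ w

/-- The meet `M₁ ∧_I M₂`: each worker gets its more preferred partner. -/
def meetMap {n : ℕ} (I : SMInstance n) (M₁ M₂ : Fin n → Fin n) : Fin n → Fin n :=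
  fun w => if I.wRank w (M₁ w) < I.wRank w (M₂ w) then M₁ w else M₂ w


/-!
The join and the meet of two matchings that are stable under one instance are again stable under
it (Conway's lattice theorem), so `M₁ ∨_A M₂` and `M₁ ∨_B M₂` are both bijections. Every worker
other than `w₁` ranks firms identically in `A` and `B`, so the two joins agree off `w₁`; two
bijections agreeing off a single point agree everywhere. Hence the joins coincide and are stable
under both instances, and likewise for the meets.
-/

theorem Function.eq_of_forall_ne_eq {α β : Type*} {f g : α → β} (hf : Function.Injective f)
    (hg : Function.Surjective g) (a : α) (h : ∀ x, x ≠ a → f x = g x) : f = g := by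
  funext x
  by_cases hx : x = a
  · subst hx
    obtain ⟨y, hy⟩ := hg (f x)
    by_cases hyx : y = x
    · rw [← hy, hyx]
    · exact absurd (hf ((h y hyx).trans hy)) hyx
  · exact h x hx

section StableLattice

variable {n : ℕ} (I : SMInstance n) {M M₁ M₂ : Fin n → Fin n}

theorem joinMap_eq_or (w : Fin n) : joinMap I M₁ M₂ w = M₁ w ∨ joinMap I M₁ M₂ w = M₂ w := by
  unfold joinMap; split_ifs <;> simp

theorem meetMap_eq_or (w : Fin n) : meetMap I M₁ M₂ w = M₁ w ∨ meetMap I M₁ M₂ w = M₂ w := by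
  unfold meetMap; split_ifs <;> simp

theorem wRank_le_joinMap_left (w : Fin n) : I.wRank w (M₁ w) ≤ I.wRank w (joinMap I M₁ M₂ w) := by
  unfold joinMap; split_ifs with h
  · exact h.le
  · exact le_rfl

theorem wRank_le_joinMap_right (w : Fin n) :
    I.wRank w (M₂ w) ≤ I.wRank w (joinMap I M₁ M₂ w) := by
  unfold joinMap; split_ifs with h
  · exact le_rfl
  · exact not_lt.1 h

theorem wRank_meetMap_le_left (w : Fin n) : I.wRank w (meetMap I M₁ M₂ w) ≤ I.wRank w (M₁ w) := by
  unfold meetMap; split_ifs with h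
  · exact le_rfl
  · exact not_lt.1 h

theorem wRank_meetMap_le_right (w : Fin n) :
    I.wRank w (meetMap I M₁ M₂ w) ≤ I.wRank w (M₂ w) := by
  unfold meetMap; split_ifs with h
  · exact h.le
  · exact le_rfl

theorem joinMap_eq_right_of_wRank_le {w : Fin n} (h : I.wRank w (M₁ w) ≤ I.wRank w (M₂ w)) :
    joinMap I M₁ M₂ w = M₂ w := by
  unfold joinMap; split_ifs with hlt
  · rfl
  · exact I.wRank_inj w (le_antisymm h (not_lt.1 hlt))

theorem joinMap_comm (M₁ M₂ : Fin n → Fin n) : joinMap I M₂ M₁ = joinMap I M₁ M₂ := by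
  funext w
  unfold joinMap
  split_ifs with h h' h'
  · exact absurd h (asymm h')
  · rfl
  · rfl
  · exact I.wRank_inj w (le_antisymm (not_lt.1 h') (not_lt.1 h))

variable {I}

theorem IsStable.fRank_partner_le (hM : IsStable I M) {w w' f : Fin n}
    (hf : I.wRank w f < I.wRank w (M w)) (hw' : M w' = f) : I.fRank f w' ≤ I.fRank f w :=
  not_lt.1 fun hlt => hM.2 w f ⟨by rintro rfl; exact lt_irrefl _ hf, hf, w', hw', hlt⟩

/-- Otherwise the common firm would have to prefer each of the two workers to the other. -/
theorem IsStable.eq_of_apply_eq (ha : IsStable I M₁) (hb : IsStable I M₂) {w w' : Fin n}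
    (hf : M₁ w = M₂ w') (hw : I.wRank w (M₁ w) ≤ I.wRank w (M₂ w))
    (hw' : I.wRank w' (M₂ w') ≤ I.wRank w' (M₁ w')) : w = w' := by
  by_contra hne
  have h₂w : M₂ w ≠ M₁ w := fun e => hne (hb.1.1 (e.trans hf))
  have h₁w' : M₁ w' ≠ M₂ w' := fun e => hne (ha.1.1 (hf.trans e.symm))
  have hlt : I.wRank w (M₁ w) < I.wRank w (M₂ w) := hw.lt_of_ne ((I.wRank_inj w).ne h₂w.symm)
  have hlt' : I.wRank w' (M₂ w') < I.wRank w' (M₁ w') :=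
    hw'.lt_of_ne ((I.wRank_inj w').ne h₁w'.symm)
  rw [hf] at hlt
  rw [← hf] at hlt'
  exact hne (I.fRank_inj (M₁ w) (le_antisymm (ha.fRank_partner_le hlt' rfl)
    (by rw [hf]; exact hb.fRank_partner_le hlt rfl)))

theorem joinMap_surjective (h₁ : IsStable I M₁) (h₂ : IsStable I M₂) :
    Function.Surjective (joinMap I M₁ M₂) := by
  intro f
  obtain ⟨w, hw⟩ := h₁.1.2 f
  obtain ⟨w', hw'⟩ := h₂.1.2 f
  by_contra! hnone
  have hJw : joinMap I M₁ M₂ w = M₂ w :=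
    (joinMap_eq_or I w).resolve_left fun e => hnone w (e.trans hw)
  have hJw' : joinMap I M₁ M₂ w' = M₁ w' :=
    (joinMap_eq_or I w').resolve_right fun e => hnone w' (e.trans hw')
  have hww' : w = w' := h₁.eq_of_apply_eq h₂ (hw.trans hw'.symm)
    (hJw ▸ wRank_le_joinMap_left I w) (hJw' ▸ wRank_le_joinMap_right I w')
  exact hnone w (hJw.trans (hww' ▸ hw'))

theorem meetMap_injective (h₁ : IsStable I M₁) (h₂ : IsStable I M₂) :
    Function.Injective (meetMap I M₁ M₂) := by
  intro w w' heq
  rcases meetMap_eq_or I w with hw | hw <;> rcases meetMap_eq_or I w' with hw' | hw' <;>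
    have hf := (hw.symm.trans heq).trans hw'
  · exact h₁.1.1 hf
  · exact h₁.eq_of_apply_eq h₂ hf (hw ▸ wRank_meetMap_le_right I w)
      (hw' ▸ wRank_meetMap_le_left I w')
  · exact h₂.eq_of_apply_eq h₁ hf (hw ▸ wRank_meetMap_le_left I w)
      (hw' ▸ wRank_meetMap_le_right I w')
  · exact h₂.1.1 hf

/-- If `w''` preferred `f` to `M₁ w''` it would block `M₁` with `f`'s partner `w'`; otherwise
`w''` also gets `f` in the join. -/
theorem fRank_joinMap_le_right (h₁ : IsStable I M₁) (h₂ : IsStable I M₂)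
    (hJ : Function.Injective (joinMap I M₁ M₂)) {w' w'' f : Fin n}
    (hw' : joinMap I M₁ M₂ w' = f) (hw'' : M₂ w'' = f) : I.fRank f w' ≤ I.fRank f w'' := by
  rcases joinMap_eq_or I w' with h | h
  · by_cases hpref : I.wRank w'' f < I.wRank w'' (M₁ w'')
    · exact h₁.fRank_partner_le hpref (h.symm.trans hw')
    · have hJw'' : joinMap I M₁ M₂ w'' = f :=
        (joinMap_eq_right_of_wRank_le I (hw'' ▸ not_lt.1 hpref)).trans hw''
      rw [hJ (hJw''.trans hw'.symm)]
  · rw [h₂.1.1 ((h.symm.trans hw').trans hw''.symm)]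

theorem fRank_joinMap_le_left (h₁ : IsStable I M₁) (h₂ : IsStable I M₂)
    (hJ : Function.Injective (joinMap I M₁ M₂)) {w' w'' f : Fin n}
    (hw' : joinMap I M₁ M₂ w' = f) (hw'' : M₁ w'' = f) : I.fRank f w' ≤ I.fRank f w'' := by
  rw [← joinMap_comm] at hJ hw'
  exact fRank_joinMap_le_right h₂ h₁ hJ hw' hw''

theorem IsStable.join (h₁ : IsStable I M₁) (h₂ : IsStable I M₂) :
    IsStable I (joinMap I M₁ M₂) := by
  have hbij : Function.Bijective (joinMap I M₁ M₂) :=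
    Finite.surjective_iff_bijective.1 (joinMap_surjective h₁ h₂)
  refine ⟨hbij, ?_⟩
  rintro w f ⟨-, hpref, w', hw', hfirm⟩
  rcases joinMap_eq_or I w with hJw | hJw
  · obtain ⟨w'', hw''⟩ := h₁.1.2 f
    exact (hfirm.trans_le ((fRank_joinMap_le_left h₁ h₂ hbij.1 hw' hw'').trans
      (h₁.fRank_partner_le (by rwa [hJw] at hpref) hw''))).false
  · obtain ⟨w'', hw''⟩ := h₂.1.2 f
    exact (hfirm.trans_le ((fRank_joinMap_le_right h₁ h₂ hbij.1 hw' hw'').trans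
      (h₂.fRank_partner_le (by rwa [hJw] at hpref) hw''))).false

theorem IsStable.meet (h₁ : IsStable I M₁) (h₂ : IsStable I M₂) :
    IsStable I (meetMap I M₁ M₂) := by
  refine ⟨Finite.injective_iff_bijective.1 (meetMap_injective h₁ h₂), ?_⟩
  rintro w f ⟨-, hpref, w', hw', hfirm⟩
  rcases meetMap_eq_or I w' with h | h
  · exact (hfirm.trans_le (h₁.fRank_partner_le
      (hpref.trans_le (wRank_meetMap_le_left I w)) (h.symm.trans hw'))).false
  · exact (hfirm.trans_le (h₂.fRank_partner_le
      (hpref.trans_le (wRank_meetMap_le_right I w)) (h.symm.trans hw'))).false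

end StableLattice

theorem stmt10_general {n : ℕ} (A B : SMInstance n) (w₁ : Fin n)
    (hW : ∀ w, w ≠ w₁ → A.wRank w = B.wRank w)
    (M₁ M₂ : Fin n → Fin n)
    (h₁ : IsStable A M₁ ∧ IsStable B M₁)
    (h₂ : IsStable A M₂ ∧ IsStable B M₂) :
    joinMap A M₁ M₂ = joinMap B M₁ M₂ ∧ meetMap A M₁ M₂ = meetMap B M₁ M₂ ∧
    (IsStable A (joinMap A M₁ M₂) ∧ IsStable B (joinMap A M₁ M₂)) ∧
    (IsStable A (meetMap A M₁ M₂) ∧ IsStable B (meetMap A M₁ M₂)) := by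
  obtain ⟨hA₁, hB₁⟩ := h₁
  obtain ⟨hA₂, hB₂⟩ := h₂
  have hJA := hA₁.join hA₂
  have hJB := hB₁.join hB₂
  have hKA := hA₁.meet hA₂
  have hKB := hB₁.meet hB₂
  have hJ : joinMap A M₁ M₂ = joinMap B M₁ M₂ :=
    Function.eq_of_forall_ne_eq hJA.1.1 hJB.1.2 w₁ fun w hw => by simp only [joinMap, hW w hw]
  have hK : meetMap A M₁ M₂ = meetMap B M₁ M₂ :=
    Function.eq_of_forall_ne_eq hKA.1.1 hKB.1.2 w₁ fun w hw => by simp only [meetMap, hW w hw]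
  exact ⟨hJ, hK, ⟨hJA, hJ ▸ hJB⟩, ⟨hKA, hK ▸ hKB⟩⟩

/-- if A and B are (1,n) (all workers except possibly w₁ have identical
preferences in A and B), then for M₁, M₂ stable under both, the join and meet in A
agree with those in B, and both are stable under both A and B. -/
theorem stmt10 {n : ℕ} (hn : 1 ≤ n) (A B : SMInstance n) (w₁ : Fin n)
    (hW : ∀ w, w ≠ w₁ → A.wRank w = B.wRank w)
    (M₁ M₂ : Fin n → Fin n)
    (h₁ : IsStable A M₁ ∧ IsStable B M₁)
    (h₂ : IsStable A M₂ ∧ IsStable B M₂) :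
    joinMap A M₁ M₂ = joinMap B M₁ M₂ ∧ meetMap A M₁ M₂ = meetMap B M₁ M₂ ∧
    (IsStable A (joinMap A M₁ M₂) ∧ IsStable B (joinMap A M₁ M₂)) ∧
    (IsStable A (meetMap A M₁ M₂) ∧ IsStable B (meetMap A M₁ M₂)) :=
  stmt10_general A B w₁ hW M₁ M₂ h₁ h₂
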